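/- L_M(x) = (1/a)·log(e^{ax}+e^{-ax}+b) with a > 0 and b > -2 is convex on all of ℝ if and only if b ≥ 0. -/

import Mathlib

/-!
Since `e^{ax} + e^{-ax} = 2 cosh (ax)` and convexity is unaffected by positive scaling of the
argument and of the value, it suffices to study `h t = log (2 cosh t + b)`, with
`h' t = 2 sinh t / (2 cosh t + b)`. For `b ≥ 0` this derivative is monotone, because
`sinh x (2 cosh y + b) - sinh y (2 cosh x + b) = 2 sinh (x - y) + b (sinh x - sinh y)`.
For `b < 0`, with `g t = 2 cosh t + b`, the identity
`g t ^ 2 - g (t - d) * g (t + d) = 4 (cosh d - 1) (-b cosh t - cosh d - 1)`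
is positive once `cosh t` is large, contradicting the midpoint inequality for `h = log ∘ g`.
-/

open Real Set

lemma ConvexOn.const_mul_comp_mul {h : ℝ → ℝ} (hh : ConvexOn ℝ univ h) {c : ℝ} (hc : 0 ≤ c)
    (a : ℝ) : ConvexOn ℝ univ (fun x => c * h (a * x)) :=
  (hh.comp_linearMap (LinearMap.mulLeft ℝ a)).smul hc

lemma convexOn_univ_const_mul_comp_mul_iff {h : ℝ → ℝ} {a c : ℝ} (ha : a ≠ 0) (hc : 0 < c) :
    ConvexOn ℝ univ (fun x => c * h (a * x)) ↔ ConvexOn ℝ univ h := by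
  refine ⟨fun hF => ?_, fun hh => hh.const_mul_comp_mul hc.le a⟩
  convert hF.const_mul_comp_mul (inv_nonneg.2 hc.le) a⁻¹ using 1
  funext t
  rw [mul_inv_cancel_left₀ ha, inv_mul_cancel_left₀ hc.ne']

lemma ConvexOn.two_mul_le_add {f : ℝ → ℝ} (hf : ConvexOn ℝ univ f) (t d : ℝ) :
    2 * f t ≤ f (t - d) + f (t + d) := by
  have h := hf.2 (mem_univ (t - d)) (mem_univ (t + d)) (by norm_num : (0 : ℝ) ≤ 1 / 2)
    (by norm_num : (0 : ℝ) ≤ 1 / 2) (add_halves 1)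
  have hmid : (1 / 2 : ℝ) • (t - d) + (1 / 2 : ℝ) • (t + d) = t := by
    simp only [smul_eq_mul]; ring
  rw [hmid, smul_eq_mul, smul_eq_mul] at h
  linarith

lemma two_cosh_add_sq_sub_mul (b t d : ℝ) :
    (2 * cosh t + b) ^ 2 - (2 * cosh (t - d) + b) * (2 * cosh (t + d) + b) =
      4 * (cosh d - 1) * (-b * cosh t - cosh d - 1) := by
  rw [cosh_sub, cosh_add]
  linear_combination (-4 * (cosh d ^ 2 - 1)) * cosh_sq_sub_sinh_sq t
    - 4 * sinh t ^ 2 * cosh_sq_sub_sinh_sq d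

lemma two_cosh_add_pos {b : ℝ} (hb : 0 < b + 2) (t : ℝ) : 0 < 2 * cosh t + b := by
  linarith [one_le_cosh t]

lemma hasDerivAt_log_two_cosh_add {b : ℝ} (hb : 0 < b + 2) (t : ℝ) :
    HasDerivAt (fun t => log (2 * cosh t + b)) (2 * sinh t / (2 * cosh t + b)) t :=
  (((hasDerivAt_cosh t).const_mul 2).add_const b).log (two_cosh_add_pos hb t).ne'

lemma convexOn_log_two_cosh_add {b : ℝ} (hb : 0 ≤ b) :
    ConvexOn ℝ univ (fun t => log (2 * cosh t + b)) := by
  have hb2 : 0 < b + 2 := by linarith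
  have hderiv : deriv (fun t => log (2 * cosh t + b)) = fun t => 2 * sinh t / (2 * cosh t + b) :=
    funext fun t => (hasDerivAt_log_two_cosh_add hb2 t).deriv
  refine Monotone.convexOn_univ_of_deriv
    (fun t => (hasDerivAt_log_two_cosh_add hb2 t).differentiableAt) ?_
  intro x y hxy
  rw [hderiv, div_le_div_iff₀ (two_cosh_add_pos hb2 x) (two_cosh_add_pos hb2 y), ← sub_nonneg]
  have hsub : sinh (x - y) ≤ 0 := sinh_nonpos_iff.2 (sub_nonpos.2 hxy)
  have hmono : sinh x ≤ sinh y := sinh_le_sinh.2 hxy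
  calc (0 : ℝ) ≤ -4 * sinh (x - y) + 2 * b * (sinh y - sinh x) := by nlinarith
    _ = _ := by rw [sinh_sub]; ring

lemma nonneg_of_convexOn_log_two_cosh_add {b : ℝ} (hb : 0 < b + 2)
    (hconv : ConvexOn ℝ univ (fun t => log (2 * cosh t + b))) : 0 ≤ b := by
  by_contra! hneg
  set K := (cosh 1 + 2) / -b
  have hK : 1 ≤ K := by
    rw [le_div_iff₀ (neg_pos.2 hneg)]
    linarith [one_le_cosh 1]
  set t := arcosh K
  have hcosh : -b * cosh t = cosh 1 + 2 := by
    rw [cosh_arcosh hK, mul_div_cancel₀ _ (neg_ne_zero.2 hneg.ne)]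
  have hgap : 0 < (2 * cosh t + b) ^ 2 - (2 * cosh (t - 1) + b) * (2 * cosh (t + 1) + b) := by
    rw [two_cosh_add_sq_sub_mul, hcosh]
    linarith [one_lt_cosh.2 (one_ne_zero : (1 : ℝ) ≠ 0)]
  have hpos := two_cosh_add_pos hb
  have hsq : (2 * cosh t + b) ^ 2 ≤ (2 * cosh (t - 1) + b) * (2 * cosh (t + 1) + b) := by
    rw [← log_le_log_iff (pow_pos (hpos t) 2) (mul_pos (hpos _) (hpos _)), log_pow,
      log_mul (hpos _).ne' (hpos _).ne']
    exact_mod_cast hconv.two_mul_le_add t 1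
  linarith

theorem stmt_6 (a b : ℝ) (ha : 0 < a) (hb : 0 < b + 2) :
    ConvexOn ℝ Set.univ
      (fun x : ℝ => (1 / a) * Real.log (Real.exp (a * x) + Real.exp (-(a * x)) + b)) ↔
      0 ≤ b := by
  have hcosh : ∀ x, exp x + exp (-x) = 2 * cosh x := fun x => by rw [cosh_eq]; ring
  simp only [hcosh]
  rw [convexOn_univ_const_mul_comp_mul_iff (h := fun t => log (2 * cosh t + b)) ha.ne'
    (one_div_pos.2 ha)]
  exact ⟨nonneg_of_convexOn_log_two_cosh_add hb, convexOn_log_two_cosh_add⟩
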